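/- arXiv:2605.06019 — 2 statements merged into one kernel-verified Lean document; each statement's English description precedes it below -/
import Mathlib

section
/- For positive semidefinite A, B ∈ Mₙ(ℂ), let S_A(x) = A ∘ x denote the Schur (Hadamard) multiplier. Then the Choi matrix of S_A equals V A V* where V : ℂⁿ → ℂⁿ ⊗ ℂⁿ is the isometry V eᵢ = eᵢ ⊗ eᵢ, and consequently the geometric mean of Schur multipliers satisfies S_A # S_B = S_{A#B}. -/
open Matrix
open scoped ComplexOrder

/-- A linear map between matrix algebras is completely positive if every amplification
`id_{M_k} ⊗ Φ` preserves positive semidefiniteness. -/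
def IsCP {m n : Type*} [Fintype m] [Fintype n]
    (Φ : Matrix m m ℂ →ₗ[ℂ] Matrix n n ℂ) : Prop :=
  ∀ (k : ℕ) (M : Matrix (Fin k × m) (Fin k × m) ℂ), M.PosSemidef →
    (Matrix.of fun p q : Fin k × n =>
      Φ (Matrix.of fun x y => M (p.1, x) (q.1, y)) p.2 q.2).PosSemidef

/-- The Choi matrix `C_Φ = Σ_{i,j} e_{ij} ⊗ Φ(e_{ij})`. -/
noncomputable def choi {m n : Type*} [Fintype m] [DecidableEq m] [Fintype n]
    (Φ : Matrix m m ℂ →ₗ[ℂ] Matrix n n ℂ) : Matrix (m × n) (m × n) ℂ :=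
  ∑ i : m, ∑ j : m,
    Matrix.kroneckerMap (· * ·) (Matrix.single i j 1) (Φ (Matrix.single i j 1))

/-- The block map `x ↦ [[Φ(x), Θ(x)],[Θ(x), Ψ(x)]]`. -/
noncomputable def blockMap {m n : Type*} [Fintype m] [Fintype n]
    (Φ Θ Ψ : Matrix m m ℂ →ₗ[ℂ] Matrix n n ℂ) :
    Matrix m m ℂ →ₗ[ℂ] Matrix (n ⊕ n) (n ⊕ n) ℂ where
  toFun x := Matrix.fromBlocks (Φ x) (Θ x) (Θ x) (Ψ x)
  map_add' x y := by ext (i | i) (j | j) <;> simp [Matrix.fromBlocks]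
  map_smul' c x := by ext (i | i) (j | j) <;> simp [Matrix.fromBlocks]

/-- `G` is the matrix geometric mean of `A` and `B`: the maximum positive semidefinite
`X` with `[[A, X],[X, B]] ≥ 0`. -/
def IsGeomMean {N : Type*} [Fintype N] (A B G : Matrix N N ℂ) : Prop :=
  G.PosSemidef ∧ (Matrix.fromBlocks A G G B).PosSemidef ∧
    ∀ X : Matrix N N ℂ, X.PosSemidef → (Matrix.fromBlocks A X X B).PosSemidef →
      (G - X).PosSemidef

/-- The Schur (Hadamard) multiplier `S_A(x) = A ∘ x`. -/
noncomputable def schurMap {n : Type*} [Fintype n] (A : Matrix n n ℂ) :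
    Matrix n n ℂ →ₗ[ℂ] Matrix n n ℂ where
  toFun x := Matrix.hadamard A x
  map_add' x y := by ext i j; simp [Matrix.hadamard, mul_add]
  map_smul' c x := by ext i j; simp [Matrix.hadamard]; ring

/-!
Positivity of the block map `x ↦ [[A ∘ x, Θ x], [Θ x, B ∘ x]]` is read off its Choi matrix
`[[V A V*, C_Θ], [C_Θ, V B V*]]`. The diagonal blocks vanish at the indices `(i, a)` with `i ≠ a`,
and a zero diagonal entry of a positive semidefinite matrix kills its row and column, so
`C_Θ = V X V*`, i.e. `Θ = S_X`; compressing by `V` then gives `[[A, X], [X, B]] ≥ 0`. Conversely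
`[[A, X], [X, B]] ≥ 0` makes the block map completely positive by the Schur product theorem.
So the maximal map is some `S_X`: maximality against `S_G` gives `X ≥ G` (evaluate `S_{X-G}` at
the all-ones matrix), and maximality of `G` gives `G ≥ X`.
-/

namespace Matrix.PosSemidef

variable {𝕜 m n : Type*} [RCLike 𝕜]

theorem apply_eq_zero_of_diag_eq_zero [Fintype n] {M : Matrix n n 𝕜} (hM : M.PosSemidef)
    {s : n} (hs : M s s = 0) (t : n) : M t s = 0 := by
  classical
  have hcol : M *ᵥ Pi.single s 1 = 0 :=
    (hM.dotProduct_mulVec_zero_iff _).mp (by simp [hs])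
  simpa using congrFun hcol t

theorem fromBlocks_apply₁₂_eq_zero [Fintype m] [Fintype n] {P : Matrix m m 𝕜}
    {C : Matrix m n 𝕜} {D : Matrix n m 𝕜} {R : Matrix n n 𝕜}
    (h : (fromBlocks P C D R).PosSemidef) {s : m} {t : n} (hst : P s s = 0 ∨ R t t = 0) :
    C s t = 0 := by
  rcases hst with hs | ht
  · rw [← fromBlocks_apply₁₂ P C D R, ← h.isHermitian.apply,
      h.apply_eq_zero_of_diag_eq_zero (by simpa using hs), star_zero]
  · simpa using h.apply_eq_zero_of_diag_eq_zero (s := Sum.inr t) (by simpa using ht) (.inl s)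

end Matrix.PosSemidef

section CompletelyPositive

variable {m n : Type*} [Fintype m] [Fintype n]

theorem choi_apply [DecidableEq m] (Φ : Matrix m m ℂ →ₗ[ℂ] Matrix n n ℂ) (i j : m) (a b : n) :
    choi Φ (i, a) (j, b) = Φ (single i j 1) a b := by
  simp [choi, Matrix.sum_apply, single, ite_and]

theorem choi_blockMap_submatrix [DecidableEq m] (Φ Θ Ψ : Matrix m m ℂ →ₗ[ℂ] Matrix n n ℂ) :
    (choi (blockMap Φ Θ Ψ)).submatrix
        (Sum.elim (fun s : m × n => (s.1, .inl s.2)) (fun s => (s.1, .inr s.2)))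
        (Sum.elim (fun s : m × n => (s.1, .inl s.2)) (fun s => (s.1, .inr s.2))) =
      fromBlocks (choi Φ) (choi Θ) (choi Θ) (choi Ψ) := by
  ext (⟨i, a⟩ | ⟨i, a⟩) (⟨j, b⟩ | ⟨j, b⟩) <;> simp [choi_apply, blockMap]

theorem IsCP.posSemidef_map {Φ : Matrix m m ℂ →ₗ[ℂ] Matrix n n ℂ} (hΦ : IsCP Φ)
    {M : Matrix m m ℂ} (hM : M.PosSemidef) : (Φ M).PosSemidef :=
  (hΦ 1 _ (hM.submatrix Prod.snd)).submatrix fun a : n => ((0 : Fin 1), a)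

/-- Feeding `Σ_{pq} e_{pq} ⊗ e_{pq}` (a rank-one positive matrix) to the amplification of `Φ`
produces the Choi matrix. -/
theorem IsCP.posSemidef_choi [DecidableEq m] {Φ : Matrix m m ℂ →ₗ[ℂ] Matrix n n ℂ}
    (hΦ : IsCP Φ) : (choi Φ).PosSemidef := by
  let e : Fin (Fintype.card m) ≃ m := (Fintype.equivFin m).symm
  let w : Fin (Fintype.card m) × m → ℂ := fun s => if e s.1 = s.2 then 1 else 0
  have hinput : ∀ p q,
      (of fun x y => vecMulVec w (star w) (p, x) (q, y)) = single (e p) (e q) 1 := by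
    intro p q
    ext x y
    by_cases hx : e p = x <;> by_cases hy : e q = y <;> simp [w, vecMulVec_apply, single, hx, hy]
  have h := (hΦ _ _ (posSemidef_vecMulVec_self_star w)).submatrix
    fun s : m × n => (e.symm s.1, s.2)
  convert h using 1
  ext ⟨i, a⟩ ⟨j, b⟩
  simp [hinput, choi_apply]

theorem IsCP.posSemidef_fromBlocks_choi [DecidableEq m]
    {Φ Θ Ψ : Matrix m m ℂ →ₗ[ℂ] Matrix n n ℂ} (h : IsCP (blockMap Φ Θ Ψ)) :
    (fromBlocks (choi Φ) (choi Θ) (choi Θ) (choi Ψ)).PosSemidef :=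
  choi_blockMap_submatrix Φ Θ Ψ ▸ h.posSemidef_choi.submatrix _

end CompletelyPositive

section SchurMultiplier

variable {n : Type*} [Fintype n]

theorem schurMap_apply (A x : Matrix n n ℂ) : schurMap A x = A ⊙ x := rfl

theorem schurMap_sub (A B : Matrix n n ℂ) : schurMap (A - B) = schurMap A - schurMap B := by
  refine LinearMap.ext fun x => ?_
  ext i j
  simp [schurMap_apply, sub_mul]

theorem choi_schurMap_apply [DecidableEq n] (A : Matrix n n ℂ) (i j a b : n) :
    choi (schurMap A) (i, a) (j, b) = if i = a ∧ j = b then A i j else 0 := by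
  by_cases hia : i = a <;> by_cases hjb : j = b <;> simp_all [choi_apply, schurMap_apply, single]

theorem posSemidef_of_isCP_schurMap {A : Matrix n n ℂ} (h : IsCP (schurMap A)) :
    A.PosSemidef := by
  convert h.posSemidef_map (posSemidef_vecMulVec_self_star fun _ => 1) using 1
  ext i j
  simp [schurMap_apply, vecMulVec_apply]

theorem isCP_blockMap_schurMap_iff {A X B : Matrix n n ℂ} :
    IsCP (blockMap (schurMap A) (schurMap X) (schurMap B)) ↔
      (fromBlocks A X X B).PosSemidef := by
  classical
  constructor
  · intro h
    have hdiag := h.posSemidef_fromBlocks_choi.submatrix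
      (Sum.map (fun i : n => (i, i)) (fun i => (i, i)))
    convert hdiag using 1
    ext (i | i) (j | j) <;> simp [choi_schurMap_apply]
  · intro h k M hM
    let f : Fin k × (n ⊕ n) → Fin k × n := fun p => (p.1, Sum.elim id id p.2)
    have hprod := (h.submatrix Prod.snd).hadamard (hM.submatrix f)
    have heq : (of fun p q : Fin k × (n ⊕ n) => blockMap (schurMap A) (schurMap X) (schurMap B)
        (of fun x y => M (p.1, x) (q.1, y)) p.2 q.2) =
        (fromBlocks A X X B).submatrix Prod.snd Prod.snd ⊙ M.submatrix f f := by
      ext ⟨p, u | u⟩ ⟨q, v | v⟩ <;> simp [f, blockMap, schurMap_apply]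
    rw [heq]
    exact hprod

theorem eq_schurMap_of_isCP_blockMap [DecidableEq n] {A B : Matrix n n ℂ}
    {Θ : Matrix n n ℂ →ₗ[ℂ] Matrix n n ℂ}
    (h : IsCP (blockMap (schurMap A) Θ (schurMap B))) :
    Θ = schurMap (of fun i j => Θ (single i j 1) i j) := by
  have hsupp : ∀ i j a b, ¬(i = a ∧ j = b) → Θ (single i j 1) a b = 0 := by
    intro i j a b hne
    rw [← choi_apply]
    refine h.posSemidef_fromBlocks_choi.fromBlocks_apply₁₂_eq_zero ?_
    rw [choi_schurMap_apply, choi_schurMap_apply]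
    rcases not_and_or.mp hne with hia | hjb
    · simp [hia]
    · simp [hjb]
  refine ext_linearMap ℂ fun i j => LinearMap.ext_ring ?_
  ext a b
  simp only [LinearMap.comp_apply, singleLinearMap_apply, schurMap_apply, hadamard_apply]
  by_cases hab : i = a ∧ j = b
  · obtain ⟨rfl, rfl⟩ := hab
    simp
  · simp [hsupp i j a b hab, hab]

end SchurMultiplier

def diagIsometry (n : Type*) [DecidableEq n] : Matrix (n × n) n ℂ :=
  of fun p i => if p = (i, i) then 1 else 0

theorem choi_schurMap {n : Type*} [Fintype n] [DecidableEq n] (A : Matrix n n ℂ) :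
    choi (schurMap A) = diagIsometry n * A * (diagIsometry n)ᴴ := by
  ext ⟨i, a⟩ ⟨j, b⟩
  rw [choi_schurMap_apply]
  simp only [diagIsometry, mul_apply, conjTranspose_apply, of_apply, Prod.mk.injEq, ite_and,
    ite_mul, one_mul, zero_mul, apply_ite (star : ℂ → ℂ), star_one, star_zero, mul_ite, mul_one,
    mul_zero, Finset.sum_ite_eq, Finset.mem_univ, if_true]
  by_cases hia : i = a <;> by_cases hjb : j = b <;> simp_all [eq_comm]

theorem schur_multiplier_geom_mean_general {n : Type*} [Fintype n] [DecidableEq n]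
    (A B G : Matrix n n ℂ)
    (hG : IsGeomMean A B G)
    (V : Matrix (n × n) n ℂ) (hV : V = Matrix.of fun p i => if p = (i, i) then 1 else 0)
    (Gmap : Matrix n n ℂ →ₗ[ℂ] Matrix n n ℂ)
    (hGmem : IsCP (blockMap (schurMap A) Gmap (schurMap B)))
    (hGmax : ∀ Θ : Matrix n n ℂ →ₗ[ℂ] Matrix n n ℂ,
      IsCP (blockMap (schurMap A) Θ (schurMap B)) → IsCP (Gmap - Θ)) :
    choi (schurMap A) = V * A * Vᴴ ∧ choi (schurMap B) = V * B * Vᴴ ∧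
      Gmap = schurMap G := by
  obtain ⟨hG_psd, hAGB, hG_max⟩ := hG
  obtain rfl : V = diagIsometry n := hV
  refine ⟨choi_schurMap A, choi_schurMap B, ?_⟩
  obtain ⟨X, rfl⟩ : ∃ X, Gmap = schurMap X := ⟨_, eq_schurMap_of_isCP_blockMap hGmem⟩
  have hXG : (X - G).PosSemidef := by
    refine posSemidef_of_isCP_schurMap ?_
    rw [schurMap_sub]
    exact hGmax _ (isCP_blockMap_schurMap_iff.mpr hAGB)
  have hGX : (G - X).PosSemidef :=
    hG_max X (by simpa using hXG.add hG_psd) (isCP_blockMap_schurMap_iff.mp hGmem)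
  open scoped MatrixOrder in rw [le_antisymm (a := X) hGX hXG]

/-- the Choi matrix of the Schur multiplier `S_A` is `V A V*`, where
`V : ℂⁿ → ℂⁿ ⊗ ℂⁿ` is the isometry `V eᵢ = eᵢ ⊗ eᵢ`; consequently the geometric mean of
Schur multipliers of positive semidefinite `A, B` is the Schur multiplier of `A # B`. -/
theorem schur_multiplier_geom_mean {n : Type*} [Fintype n] [DecidableEq n]
    (A B G : Matrix n n ℂ) (hA : A.PosSemidef) (hB : B.PosSemidef)
    (hG : IsGeomMean A B G)
    (V : Matrix (n × n) n ℂ) (hV : V = Matrix.of fun p i => if p = (i, i) then 1 else 0)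
    (Gmap : Matrix n n ℂ →ₗ[ℂ] Matrix n n ℂ)
    (hGmem : IsCP (blockMap (schurMap A) Gmap (schurMap B)))
    (hGmax : ∀ Θ : Matrix n n ℂ →ₗ[ℂ] Matrix n n ℂ,
      IsCP (blockMap (schurMap A) Θ (schurMap B)) → IsCP (Gmap - Θ)) :
    choi (schurMap A) = V * A * Vᴴ ∧ choi (schurMap B) = V * B * Vᴴ ∧
      Gmap = schurMap G :=
  schur_multiplier_geom_mean_general A B G hG V hV Gmap hGmem hGmax
end

section
/- Let ρ be a positive definite n×n diagonal matrix and C = vv* with v = Σᵢ eᵢ ⊗ eᵢ ∈ ℂⁿ ⊗ ℂⁿ, and let 𝛒 = ⊕ₖ ρₖ Iₙ be the n²×n² diagonal matrix. Then the matrix geometric mean satisfies C # 𝛒 = (Σᵢ ρᵢ⁻¹)^{−1/2} · C. -/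
/-!
Let `D > 0`, `C = v v*` and `s = v* D⁻¹ v`. For `X = c C` the Schur complement of the block
matrix `[[C, X], [X, D]]` is `C - c² C D⁻¹ C = (1 - c² s) C`, so `c = s^{-1/2}` is admissible.
Conversely, for an admissible `X` the Schur complement `C - X D⁻¹ X ≥ 0` forces `X` to vanish
on `v^⊥`, where `C` does. Hence `X x = X y` for `y = (v* x / s) D⁻¹ v`, and testing the block
matrix against `(c x, y)` gives `x* X x ≤ c |v* x|²`, i.e. `X ≤ c C`. For the data of the
theorem `s = Σᵢ ρᵢ⁻¹`, and the geometric mean is unique by antisymmetry of the Loewner order.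
-/

open scoped ComplexOrder

open Matrix

theorem IsGeomMean.unique {N : Type*} [Fintype N] {A B G G' : Matrix N N ℂ}
    (hG : IsGeomMean A B G) (hG' : IsGeomMean A B G') : G = G' :=
  open scoped MatrixOrder in le_antisymm (hG'.2.2 G hG.1 hG.2.1) (hG.2.2 G' hG'.1 hG'.2.1)

namespace Matrix

variable {m N : Type*} [Fintype m] [Fintype N]

theorem inv_diagonal_of_forall_ne_zero {K : Type*} [Field K] [DecidableEq N] {d : N → K}
    (hd : ∀ i, d i ≠ 0) :
    (diagonal d)⁻¹ = diagonal fun i => (d i)⁻¹ := by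
  refine inv_eq_right_inv ?_
  rw [diagonal_mul_diagonal, ← diagonal_one]
  exact congrArg diagonal (funext fun i => mul_inv_cancel₀ (hd i))

theorem PosSemidef.two_mul_re_dotProduct_mulVec_le {A : Matrix m m ℂ} {B : Matrix m N ℂ}
    {D : Matrix N N ℂ} (h : (fromBlocks A B Bᴴ D).PosSemidef) (a : m → ℂ) (b : N → ℂ) :
    2 * (star a ⬝ᵥ B *ᵥ b).re ≤ (star a ⬝ᵥ A *ᵥ a).re + (star b ⬝ᵥ D *ᵥ b).re := by
  have h := h.re_dotProduct_nonneg (Sum.elim (-a) b)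
  have hconj : star b ⬝ᵥ Bᴴ *ᵥ a = star (star a ⬝ᵥ B *ᵥ b) := by
    rw [star_dotProduct, star_mulVec, ← dotProduct_mulVec, conjTranspose_conjTranspose]
  simp only [fromBlocks_mulVec, Sum.elim_comp_inl, Sum.elim_comp_inr, Function.star_sumElim,
    sumElim_dotProduct_sumElim, mulVec_neg, dotProduct_add, star_neg, neg_dotProduct,
    dotProduct_neg, hconj, RCLike.re_to_complex, Complex.add_re, Complex.neg_re,
    Complex.star_def, Complex.conj_re] at h
  linarith

theorem vecMulVec_mul_mul_vecMulVec {R : Type*} [CommSemiring R] [StarRing R] (v : N → R)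
    (M : Matrix N N R) :
    vecMulVec v (star v) * M * vecMulVec v (star v) =
      (star v ⬝ᵥ M *ᵥ v) • vecMulVec v (star v) := by
  rw [vecMulVec_mul, vecMulVec_mul_vecMulVec, ← dotProduct_mulVec, vecMulVec_smul]

theorem dotProduct_vecMulVec_mulVec (v x : N → ℂ) :
    star x ⬝ᵥ vecMulVec v (star v) *ᵥ x = Complex.normSq (star v ⬝ᵥ x) := by
  rw [vecMulVec_mulVec, dotProduct_smul, Complex.normSq_eq_conj_mul_self, star_dotProduct]
  simp

theorem dotProduct_mulVec_inv_mulVec {R : Type*} [CommRing R] [StarRing R] [DecidableEq N]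
    {D : Matrix N N R} (hD : IsUnit D.det) (v : N → R) :
    star (D⁻¹ *ᵥ v) ⬝ᵥ D *ᵥ (D⁻¹ *ᵥ v) = star (star v ⬝ᵥ D⁻¹ *ᵥ v) := by
  rw [mulVec_mulVec, mul_nonsing_inv _ hD, one_mulVec, star_dotProduct]

variable [DecidableEq N] {v : N → ℂ} {D X : Matrix N N ℂ}

theorem mulVec_eq_zero_of_fromBlocks_vecMulVec (hD : D.PosDef) (hX : X.IsHermitian)
    (h : (fromBlocks (vecMulVec v (star v)) X X D).PosSemidef) {w : N → ℂ}
    (hw : star v ⬝ᵥ w = 0) : X *ᵥ w = 0 := by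
  have := hD.isUnit.invertible
  have hSchur : (vecMulVec v (star v) - X * D⁻¹ * Xᴴ).PosSemidef := by
    rw [← PosDef.fromBlocks₂₂ _ _ hD, hX.eq]
    exact h
  have hform : star w ⬝ᵥ (X * D⁻¹ * Xᴴ) *ᵥ w = star (Xᴴ *ᵥ w) ⬝ᵥ D⁻¹ *ᵥ (Xᴴ *ᵥ w) := by
    rw [star_mulVec, conjTranspose_conjTranspose, ← dotProduct_mulVec, mulVec_mulVec,
      mulVec_mulVec, Matrix.mul_assoc]
  have hquad := hSchur.dotProduct_mulVec_nonneg w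
  rw [sub_mulVec, dotProduct_sub, dotProduct_vecMulVec_mulVec, hw, hform] at hquad
  rw [← hX.eq]
  by_contra hXw
  have hpos := hD.inv.dotProduct_mulVec_pos hXw
  simp only [map_zero, Complex.ofReal_zero, zero_sub] at hquad
  linarith

theorem re_dotProduct_mulVec_le_of_fromBlocks_vecMulVec {s : ℝ} (hD : D.PosDef)
    (hs : star v ⬝ᵥ D⁻¹ *ᵥ v = s) (hs0 : 0 < s) (hX : X.IsHermitian)
    (h : (fromBlocks (vecMulVec v (star v)) X X D).PosSemidef) (x : N → ℂ) :
    (star x ⬝ᵥ X *ᵥ x).re ≤ (√s)⁻¹ * Complex.normSq (star v ⬝ᵥ x) := by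
  have hcc : (√s)⁻¹ * (√s)⁻¹ = s⁻¹ := by
    rw [← Real.sqrt_inv, Real.mul_self_sqrt (inv_nonneg.2 hs0.le)]
  set c : ℝ := (√s)⁻¹
  set β := star v ⬝ᵥ x
  set y := (β / s) • D⁻¹ *ᵥ v
  have hXy : X *ᵥ y = X *ᵥ x := by
    rw [eq_comm, ← sub_eq_zero, ← mulVec_sub]
    refine mulVec_eq_zero_of_fromBlocks_vecMulVec hD hX h ?_
    rw [dotProduct_sub, dotProduct_smul, hs, smul_eq_mul,
      div_mul_cancel₀ _ (by exact_mod_cast hs0.ne'), sub_self]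
  have hyDy : (star y ⬝ᵥ D *ᵥ y).re = Complex.normSq β * (c * c) := by
    rw [star_smul, mulVec_smul, smul_dotProduct, dotProduct_smul,
      dotProduct_mulVec_inv_mulVec ((isUnit_iff_isUnit_det D).1 hD.isUnit), hs, hcc]
    simp only [smul_eq_mul, ← mul_assoc, Complex.star_def, ← Complex.normSq_eq_conj_mul_self,
      Complex.conj_ofReal, ← Complex.ofReal_mul, Complex.ofReal_re, Complex.normSq_div,
      Complex.normSq_ofReal]
    field_simp
  have htest := (show (fromBlocks (vecMulVec v (star v)) X Xᴴ D).PosSemidef by rwa [hX.eq])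
    |>.two_mul_re_dotProduct_mulVec_le ((c : ℂ) • x) y
  rw [hyDy, hXy, dotProduct_vecMulVec_mulVec, star_smul, smul_dotProduct, dotProduct_smul,
    Complex.star_def, Complex.conj_ofReal, smul_eq_mul, smul_eq_mul, map_mul,
    Complex.normSq_ofReal, Complex.re_ofReal_mul, Complex.ofReal_re] at htest
  have hc : 0 < c := inv_pos.2 (Real.sqrt_pos.2 hs0)
  exact le_of_mul_le_mul_left (by linarith) hc

theorem sub_posSemidef_of_fromBlocks_vecMulVec {s : ℝ} (hD : D.PosDef)
    (hs : star v ⬝ᵥ D⁻¹ *ᵥ v = s) (hs0 : 0 < s) (hX : X.IsHermitian)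
    (h : (fromBlocks (vecMulVec v (star v)) X X D).PosSemidef) :
    ((((√s)⁻¹ : ℝ) : ℂ) • vecMulVec v (star v) - X).PosSemidef := by
  refine .of_dotProduct_mulVec_nonneg
    (((posSemidef_vecMulVec_self_star v).smul (Complex.zero_le_real.2 (by positivity))).1.sub hX)
    fun x => ?_
  have hxXx : star x ⬝ᵥ X *ᵥ x = (star x ⬝ᵥ X *ᵥ x).re :=
    Complex.ext rfl (by simpa using hX.im_star_dotProduct_mulVec_self x)
  rw [sub_mulVec, dotProduct_sub, smul_mulVec, dotProduct_smul, dotProduct_vecMulVec_mulVec, hxXx,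
    smul_eq_mul, ← Complex.ofReal_mul, ← Complex.ofReal_sub, Complex.zero_le_real, sub_nonneg]
  exact re_dotProduct_mulVec_le_of_fromBlocks_vecMulVec hD hs hs0 hX h x

theorem isGeomMean_vecMulVec_self_star {s : ℝ} (hD : D.PosDef) (hv : v ≠ 0)
    (hs : star v ⬝ᵥ D⁻¹ *ᵥ v = s) :
    IsGeomMean (vecMulVec v (star v)) D ((((√s)⁻¹ : ℝ) : ℂ) • vecMulVec v (star v)) := by
  have hs0 : 0 < s := by simpa [hs] using hD.inv.re_dotProduct_pos hv
  have := hD.isUnit.invertible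
  have hcs : (√s)⁻¹ * (√s)⁻¹ * s = 1 := by
    rw [← Real.sqrt_inv, Real.mul_self_sqrt (inv_nonneg.2 hs0.le), inv_mul_cancel₀ hs0.ne']
  set c : ℝ := (√s)⁻¹
  have hcC : ((c : ℂ) • vecMulVec v (star v)).PosSemidef :=
    (posSemidef_vecMulVec_self_star v).smul (Complex.zero_le_real.2 (by positivity))
  refine ⟨hcC, ?_, fun X hX h => sub_posSemidef_of_fromBlocks_vecMulVec hD hs hs0 hX.1 h⟩
  have hSchur : vecMulVec v (star v) -
      (c : ℂ) • vecMulVec v (star v) * D⁻¹ * ((c : ℂ) • vecMulVec v (star v)) = 0 := by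
    rw [smul_mul, smul_mul, Matrix.mul_smul, vecMulVec_mul_mul_vecMulVec, hs, smul_smul,
      smul_smul, ← Complex.ofReal_mul, ← Complex.ofReal_mul, hcs, Complex.ofReal_one, one_smul,
      sub_self]
  have h := (PosDef.fromBlocks₂₂ (vecMulVec v (star v)) ((c : ℂ) • vecMulVec v (star v)) hD).2
  rw [hcC.1.eq, hSchur] at h
  exact h .zero

end Matrix

/-- let `C = vv*` with `v = Σᵢ eᵢ⊗eᵢ ∈ ℂⁿ⊗ℂⁿ` and let `𝛒 = ⊕ₖ ρₖ Iₙ` be the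
`n²×n²` diagonal matrix built from a positive definite diagonal `ρ`. Then the matrix
geometric mean satisfies `C # 𝛒 = (Σᵢ ρᵢ⁻¹)^{-1/2} · C`. -/
theorem geom_mean_rank_one_with_diagonal {n : ℕ} (hn : 0 < n)
    (ρ : Fin n → ℝ) (hρ : ∀ i, 0 < ρ i)
    (v : Fin n × Fin n → ℂ) (hv : v = fun p => if p.1 = p.2 then 1 else 0)
    (C D G : Matrix (Fin n × Fin n) (Fin n × Fin n) ℂ)
    (hC : C = Matrix.vecMulVec v (star v))
    (hD : D = Matrix.diagonal fun p => (ρ p.1 : ℂ))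
    (hG : IsGeomMean C D G) :
    G = (((Real.sqrt (∑ i, (ρ i)⁻¹))⁻¹ : ℝ) : ℂ) • C := by
  have hDpd : D.PosDef := hD ▸ posDef_diagonal_iff.2 fun p => Complex.zero_lt_real.2 (hρ p.1)
  have hv0 : v ≠ 0 := fun h => by simpa [hv] using congrFun h (⟨0, hn⟩, ⟨0, hn⟩)
  have hs : star v ⬝ᵥ D⁻¹ *ᵥ v = ((∑ i, (ρ i)⁻¹ : ℝ) : ℂ) := by
    rw [hD, inv_diagonal_of_forall_ne_zero fun p => by exact_mod_cast (hρ p.1).ne', hv]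
    simp [dotProduct, mulVec_diagonal, Fintype.sum_prod_type]
  subst hC
  exact hG.unique (isGeomMean_vecMulVec_self_star hDpd hv0 hs)
end
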